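/- Fix $e\ge2$ and a prime $p$, and let $b\in\mathbb Z_{\ge0}$. Let $\mathtt t$ be a standard tableau of size $n$ with at most two columns such that $\mathtt s:=\operatorname{reg}_{ep^b}(\mathtt t)\ne\mathtt t$ and $e\nmid\pi_{\mathtt t}(n)+1$. Then $\mathtt t$ is $e$-regular if and only if $\mathtt s$ is not $e$-regular. -/

import Mathlib

open scoped Classical
noncomputable section

def isWall (e x : ℤ) : Prop := 0 < x + 1 ∧ (x + 1) % e = 0

def degStep (e u v : ℤ) : ℤ :=
  if isWall e u ∧ v < u then 1
  else if isWall e v ∧ v < u then -1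
  else 0

def pathDeg (e : ℤ) (π : ℕ → ℤ) (r s : ℕ) : ℤ :=
  ∑ a ∈ Finset.Ico r s, degStep e (π a) (π (a + 1))

/-- A nonnegative `±1`-path on the interval `[u,v]`. -/
def IsPathOn (π : ℕ → ℤ) (u v : ℕ) : Prop :=
  (∀ a, u ≤ a → a ≤ v → 0 ≤ π a) ∧
  (∀ a, u ≤ a → a < v → π (a + 1) = π a + 1 ∨ π (a + 1) = π a - 1)

/-- `π[r,s]` is a positive arc (within `[u,v]`). -/
def IsPosArc (e : ℤ) (π : ℕ → ℤ) (u v r s : ℕ) : Prop :=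
  u ≤ r ∧ r < s ∧ s ≤ v ∧ isWall e (π r) ∧ π s = π r ∧
    ∀ c, r < c → c < s → π r < π c ∧ π c < π r + e

/-- `π[r,s]` is a negative arc (within `[u,v]`). -/
def IsNegArc (e : ℤ) (π : ℕ → ℤ) (u v r s : ℕ) : Prop :=
  u ≤ r ∧ r < s ∧ s ≤ v ∧ isWall e (π r) ∧ π s = π r ∧
    ∀ c, r < c → c < s → π r - e < π c ∧ π c < π r

def posArcs (e : ℤ) (π : ℕ → ℤ) (u v : ℕ) : Set (ℕ × ℕ) :=
  {p | IsPosArc e π u v p.1 p.2}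

def negArcs (e : ℤ) (π : ℕ → ℤ) (u v : ℕ) : Set (ℕ × ℕ) :=
  {p | IsNegArc e π u v p.1 p.2}


def wallTimes (f : ℤ) (n : ℕ) (π : ℕ → ℤ) : Finset ℕ :=
  (Finset.range (n + 1)).filter fun a => isWall f (π a)

/-- The regularisation map on paths: reflect the tail after the last wall
visit upward in the wall, if the endpoint lies strictly below that wall. -/
def regPath (f : ℤ) (n : ℕ) (π : ℕ → ℤ) : ℕ → ℤ :=
  if h : (wallTimes f n π).Nonempty then
    let a := (wallTimes f n π).max' h
    if π n < π a then (fun b => if b ≤ a then π b else 2 * π a - π b) else π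
  else π

/-- A standard tableau of size `n` (0-based nodes): injective, image is a
Young diagram (downward closed), entries increase along rows and columns. -/
def IsStdTab (n : ℕ) (t : Fin n → ℕ × ℕ) : Prop :=
  Function.Injective t ∧
  (∀ r : Fin n, ∀ a b : ℕ, a ≤ (t r).1 → b ≤ (t r).2 → ∃ r' : Fin n, t r' = (a, b)) ∧
  (∀ r s : Fin n, (t r).1 ≤ (t s).1 → (t r).2 ≤ (t s).2 → r ≤ s)

/-- Number of entries among the first `a` entries lying in column `j`. -/
def cntCol (n : ℕ) (t : Fin n → ℕ × ℕ) (a j : ℕ) : ℕ :=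
  (Finset.univ.filter fun r : Fin n => (r : ℕ) < a ∧ (t r).2 = j).card

/-- The type-`A₁` path attached to a two-column tableau. -/
def pth (n : ℕ) (t : Fin n → ℕ × ℕ) (a : ℕ) : ℤ :=
  (cntCol n t a 0 : ℤ) - (cntCol n t a 1 : ℤ)

/-- Membership in the Young diagram of `(2^x, 1^y)` (0-based). -/
def memShape2 (x y : ℕ) (v : ℕ × ℕ) : Prop :=
  (v.1 < x ∧ v.2 < 2) ∨ (x ≤ v.1 ∧ v.1 < x + y ∧ v.2 = 0)

/-- The residue of a node (0-based): column minus row, mod `e`. -/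
def resNode (e : ℕ) (v : ℕ × ℕ) : ZMod e := (v.2 : ZMod e) - (v.1 : ZMod e)

/-!
Let `a` be the last time the path `π` of `t` visits an `f`-wall, `f = e p^b`; since `π` is
not `f`-regular, it ends strictly below the wall `w = π a` and, moving by `±1` steps without
returning to `w`, stays below it after `a`. The path of `s` is the reflection of that tail in
`w`. As `e ∣ f ∣ w + 1`, the reflection `x ↦ 2w - x` maps `e`-walls to `e`-walls, so both paths
visit `e`-walls at the same times, and the last such time `a'` is at least `a`. Both endpoints
are then reflected relative to the value at `a'`, which they cannot equal because
`e ∤ π n + 1`: exactly one of the two paths ends below its last `e`-wall.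
-/

lemma isWall.of_dvd {e f x : ℤ} (h : isWall f x) (hef : e ∣ f) : isWall e x :=
  ⟨h.1, Int.emod_eq_zero_of_dvd (hef.trans (Int.dvd_of_emod_eq_zero h.2))⟩

lemma isWall_two_mul_sub_iff {e w x : ℤ} (hw : isWall e w) (hx : 0 ≤ x) (hxw : x ≤ w) :
    isWall e (2 * w - x) ↔ isWall e x := by
  have hdvd : e ∣ 2 * (w + 1) := dvd_mul_of_dvd_right (Int.dvd_of_emod_eq_zero hw.2) 2
  have hsum : 2 * w - x + 1 = 2 * (w + 1) - (x + 1) := by ring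
  unfold isWall
  rw [← Int.dvd_iff_emod_eq_zero, ← Int.dvd_iff_emod_eq_zero, hsum, dvd_sub_right hdvd]
  exact and_congr_left' ⟨fun _ => by omega, fun _ => by omega⟩

lemma lt_of_forall_ne_of_step {π : ℕ → ℤ} {w : ℤ} {c n : ℕ}
    (hstep : ∀ k, c ≤ k → k < n → π (k + 1) = π k + 1 ∨ π (k + 1) = π k - 1)
    (hne : ∀ k, c ≤ k → k ≤ n → π k ≠ w) (hn : π n < w) (hcn : c ≤ n) : π c < w := by
  induction hcn using Nat.decreasingInduction with
  | self => exact hn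
  | of_succ k hkn ih =>
    have := ih (fun j hj hjn => hstep j (by omega) hjn) (fun j hj hjn => hne j (by omega) hjn)
    have := hne k le_rfl hkn.le
    rcases hstep k le_rfl hkn with h | h <;> omega

def reflectAfter (a : ℕ) (π : ℕ → ℤ) : ℕ → ℤ :=
  fun b => if b ≤ a then π b else 2 * π a - π b

lemma le_of_mem_wallTimes {f : ℤ} {n a : ℕ} {π : ℕ → ℤ} (ha : a ∈ wallTimes f n π) : a ≤ n := by
  simp only [wallTimes, Finset.mem_filter, Finset.mem_range] at ha
  omega

lemma isWall_of_mem_wallTimes {f : ℤ} {n a : ℕ} {π : ℕ → ℤ} (ha : a ∈ wallTimes f n π) :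
    isWall f (π a) :=
  (Finset.mem_filter.mp ha).2

lemma mem_wallTimes {f : ℤ} {n a : ℕ} {π : ℕ → ℤ} (han : a ≤ n) (ha : isWall f (π a)) :
    a ∈ wallTimes f n π :=
  Finset.mem_filter.mpr ⟨Finset.mem_range.mpr (Nat.lt_succ_of_le han), ha⟩

lemma regPath_eq_self_iff {f : ℤ} {n a : ℕ} {π : ℕ → ℤ}
    (ha : IsGreatest (wallTimes f n π : Set ℕ) a) : regPath f n π = π ↔ π a ≤ π n := by
  have hne : (wallTimes f n π).Nonempty := ⟨a, ha.1⟩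
  obtain rfl : (wallTimes f n π).max' hne = a := (Finset.isGreatest_max' _ hne).unique ha
  rw [regPath, dif_pos hne]
  dsimp only
  split_ifs with hlt
  · refine iff_of_false (fun heq => ?_) (not_le.mpr hlt)
    have hna : (wallTimes f n π).max' hne < n :=
      lt_of_le_of_ne (le_of_mem_wallTimes ha.1) fun h => (h ▸ hlt).false
    have := congrFun heq n
    rw [if_neg (not_le.mpr hna)] at this
    omega
  · exact iff_of_true rfl (not_lt.mp hlt)

lemma exists_regPath_eq_reflectAfter {f : ℤ} {n : ℕ} {π : ℕ → ℤ} (h : regPath f n π ≠ π) :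
    ∃ a, IsGreatest (wallTimes f n π : Set ℕ) a ∧ π n < π a ∧
      regPath f n π = reflectAfter a π := by
  have hne : (wallTimes f n π).Nonempty := by
    by_contra hemp
    exact h (by simp only [regPath, dif_neg hemp])
  have hmax := Finset.isGreatest_max' _ hne
  have hlt := not_le.mp fun hle => h ((regPath_eq_self_iff hmax).mpr hle)
  refine ⟨_, hmax, hlt, ?_⟩
  rw [regPath, dif_pos hne]
  exact if_pos hlt

lemma lt_of_isGreatest_wallTimes {f : ℤ} {n a c : ℕ} {π : ℕ → ℤ} (hπ : IsPathOn π 0 n)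
    (ha : IsGreatest (wallTimes f n π : Set ℕ) a) (hn : π n < π a) (hac : a < c)
    (hcn : c ≤ n) : π c < π a := by
  refine lt_of_forall_ne_of_step (fun k _ hk => hπ.2 k (Nat.zero_le k) hk)
    (fun k hck hkn hk => ?_) hn hcn
  have : k ≤ a := ha.2 (mem_wallTimes hkn (hk ▸ isWall_of_mem_wallTimes ha.1))
  omega

lemma wallTimes_reflectAfter {e : ℤ} {n a : ℕ} {π : ℕ → ℤ} (hπ : IsPathOn π 0 n)
    (hw : isWall e (π a)) (hbelow : ∀ c, a < c → c ≤ n → π c ≤ π a) :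
    wallTimes e n (reflectAfter a π) = wallTimes e n π := by
  refine Finset.filter_congr fun c hc => ?_
  have hcn : c ≤ n := Nat.lt_succ_iff.mp (Finset.mem_range.mp hc)
  unfold reflectAfter
  split_ifs with hca
  · rfl
  · exact isWall_two_mul_sub_iff hw (hπ.1 c (Nat.zero_le c) hcn) (hbelow c (by omega) hcn)

theorem regPath_eq_self_iff_reflectAfter {e : ℤ} {n a : ℕ} {π : ℕ → ℤ} (hπ : IsPathOn π 0 n)
    (han : a ≤ n) (hw : isWall e (π a)) (hbelow : ∀ c, a < c → c ≤ n → π c < π a)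
    (hend : ¬ e ∣ π n + 1) :
    regPath e n π = π ↔ regPath e n (reflectAfter a π) ≠ reflectAfter a π := by
  have hsame := wallTimes_reflectAfter hπ hw fun c hac hcn => (hbelow c hac hcn).le
  obtain ⟨a', ha'⟩ : ∃ a', IsGreatest (wallTimes e n π : Set ℕ) a' :=
    ⟨_, Finset.isGreatest_max' _ ⟨a, mem_wallTimes han hw⟩⟩
  have ha'refl : IsGreatest (wallTimes e n (reflectAfter a π) : Set ℕ) a' := hsame ▸ ha'
  have haa' : a ≤ a' := ha'.2 (mem_wallTimes han hw)
  have hna' : π a' ≠ π n := fun h =>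
    hend (h ▸ Int.dvd_of_emod_eq_zero (isWall_of_mem_wallTimes ha'.1).2)
  have hna : a < n := lt_of_le_of_ne han fun h => hend (h ▸ Int.dvd_of_emod_eq_zero hw.2)
  have hreflect_a' : reflectAfter a π a' = 2 * π a - π a' := by
    unfold reflectAfter
    split_ifs with h
    · rw [le_antisymm h haa']; ring
    · rfl
  have hreflect_n : reflectAfter a π n = 2 * π a - π n := if_neg (not_le.mpr hna)
  rw [regPath_eq_self_iff ha', Ne, regPath_eq_self_iff ha'refl, hreflect_a', hreflect_n]
  omega

lemma cntCol_succ (n : ℕ) (t : Fin n → ℕ × ℕ) (a j : ℕ) (ha : a < n) :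
    cntCol n t (a + 1) j = cntCol n t a j + if (t ⟨a, ha⟩).2 = j then 1 else 0 := by
  have hlast : (if (t ⟨a, ha⟩).2 = j then 1 else 0) =
      ∑ r : Fin n, if r = ⟨a, ha⟩ then (if (t r).2 = j then 1 else 0) else 0 := by simp
  rw [hlast, cntCol, cntCol, Finset.card_filter, Finset.card_filter, ← Finset.sum_add_distrib]
  refine Finset.sum_congr rfl fun r _ => ?_
  simp only [Fin.ext_iff]
  by_cases hj : (t r).2 = j <;> simp only [hj, and_true, and_false, if_false] <;> split_ifs <;>
    omega

lemma pth_succ (n : ℕ) (t : Fin n → ℕ × ℕ) (ht2 : ∀ i, (t i).2 < 2) (a : ℕ) (ha : a < n) :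
    pth n t (a + 1) = pth n t a + 1 ∨ pth n t (a + 1) = pth n t a - 1 := by
  simp only [pth, cntCol_succ n t a _ ha]
  have := ht2 ⟨a, ha⟩
  interval_cases (t ⟨a, ha⟩).2 <;> simp <;> omega

/-- Column-`1` entries are matched injectively with the column-`0` entries of their rows, which
come earlier. -/
lemma pth_nonneg (n : ℕ) (t : Fin n → ℕ × ℕ) (ht : IsStdTab n t) (a : ℕ) : 0 ≤ pth n t a := by
  rw [pth, sub_nonneg, Int.ofNat_le]
  choose g hg using fun r => ht.2.1 r (t r).1 0 le_rfl (Nat.zero_le _)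
  refine Finset.card_le_card_of_injOn g (fun r hr => ?_) (fun r₁ hr₁ r₂ hr₂ heq => ?_)
  · simp only [Finset.coe_filter, Finset.mem_univ, true_and, Set.mem_ofPred_eq] at hr ⊢
    have hle : g r ≤ r := ht.2.2 _ _ (by rw [hg]) (by rw [hg]; exact Nat.zero_le _)
    exact ⟨lt_of_le_of_lt hle hr.1, by rw [hg]⟩
  · simp only [Finset.coe_filter, Finset.mem_univ, true_and, Set.mem_ofPred_eq] at hr₁ hr₂
    have hrow := congrArg Prod.fst ((hg r₁).symm.trans (heq ▸ hg r₂))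
    exact ht.1 (Prod.ext hrow (by rw [hr₁.2, hr₂.2]))

lemma isPathOn_pth {n : ℕ} {t : Fin n → ℕ × ℕ} (ht : IsStdTab n t) (ht2 : ∀ i, (t i).2 < 2) :
    IsPathOn (pth n t) 0 n :=
  ⟨fun a _ _ => pth_nonneg n t ht a, fun a _ ha => pth_succ n t ht2 a ha⟩

theorem stmt12_general (e p : ℕ) (b n : ℕ)
    (t s : Fin n → ℕ × ℕ)
    (ht : IsStdTab n t) (ht2 : ∀ i, (t i).2 < 2)
    (hreg : pth n s = regPath ((e : ℤ) * (p : ℤ) ^ b) n (pth n t))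
    (hne : pth n s ≠ pth n t)
    (hdvd : ¬ ((e : ℤ) ∣ pth n t n + 1)) :
    regPath (e : ℤ) n (pth n t) = pth n t ↔
      regPath (e : ℤ) n (pth n s) ≠ pth n s := by
  have hπ := isPathOn_pth ht ht2
  obtain ⟨a, ha, hlt, hrefl⟩ := exists_regPath_eq_reflectAfter (hreg ▸ hne)
  rw [hreg, hrefl]
  exact regPath_eq_self_iff_reflectAfter hπ (le_of_mem_wallTimes ha.1)
    ((isWall_of_mem_wallTimes ha.1).of_dvd (dvd_mul_right _ _))
    (fun c hac hcn => lt_of_isGreatest_wallTimes hπ ha hlt hac hcn) hdvd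

theorem stmt12 (e p : ℕ) (he : 2 ≤ e) (hp : p.Prime) (b n : ℕ)
    (t s : Fin n → ℕ × ℕ)
    (ht : IsStdTab n t) (ht2 : ∀ i, (t i).2 < 2)
    (hs : IsStdTab n s) (hs2 : ∀ i, (s i).2 < 2)
    (hreg : pth n s = regPath ((e : ℤ) * (p : ℤ) ^ b) n (pth n t))
    (hne : pth n s ≠ pth n t)
    (hdvd : ¬ ((e : ℤ) ∣ pth n t n + 1)) :
    regPath (e : ℤ) n (pth n t) = pth n t ↔
      regPath (e : ℤ) n (pth n s) ≠ pth n s :=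
  stmt12_general e p b n t s ht ht2 hreg hne hdvd
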